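/- arXiv:2207.00992 — 4 statements merged into one kernel-verified Lean document; each statement's English description precedes it below -/
import Mathlib

section
/- For every real number a, the complex-valued integral ∫_0^a Log(1 − e^{2πiθ}) dθ equals (1/(2πi))·(π²/6 − Li₂(e^{2πia})), where Log denotes the principal branch of the complex logarithm (the integrand is defined for all θ with θ ∉ ℤ and is integrable, its real part having only logarithmic singularities). -/
/-!
For `r < 1` the integrand `log (1 - r e(θ))`, `e(θ) = exp (2πiθ)`, is the uniformly convergent
series `-∑ rⁿ e(nθ) / n`, which integrates termwise to `(Li₂ r - Li₂ (r e(a))) / (2πi)`.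
Then let `r → 1⁻`. On the right, `Li₂` is continuous on the closed unit disk. On the left,
dominated convergence applies: `|1 - z| ≤ 2 |1 - r z|` bounds `|log (1 - r e(θ))|` by
`|log |1 - e(θ)|| + log 2 + π`, which is integrable because `log |· - 1|` is integrable on circles.
-/

open Complex Real

/-- The dilogarithm on the closed unit disk, `Li₂(z) = ∑_{k≥1} z^k / k²`. -/
noncomputable def Li2 (z : ℂ) : ℂ := ∑' n : ℕ, z ^ (n + 1) / ((n : ℂ) + 1) ^ 2

open MeasureTheory Filter Topology Set

theorem hasSum_one_div_nat_add_one_sq :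
    HasSum (fun n : ℕ => 1 / ((n : ℝ) + 1) ^ 2) (π ^ 2 / 6) := by
  have := (hasSum_nat_add_iff (f := fun n : ℕ => 1 / (n : ℝ) ^ 2) 1).mpr
    (by simpa using hasSum_zeta_two)
  simpa using this

theorem norm_Li2_term_le {z : ℂ} (hz : ‖z‖ ≤ 1) (n : ℕ) :
    ‖z ^ (n + 1) / ((n : ℂ) + 1) ^ 2‖ ≤ 1 / ((n : ℝ) + 1) ^ 2 := by
  have hn : ‖(n : ℂ) + 1‖ = (n : ℝ) + 1 := by exact_mod_cast Complex.norm_natCast (n + 1)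
  rw [norm_div, norm_pow, norm_pow, hn]
  gcongr
  exact pow_le_one₀ (norm_nonneg z) hz

theorem hasSum_Li2 {z : ℂ} (hz : ‖z‖ ≤ 1) :
    HasSum (fun n : ℕ => z ^ (n + 1) / ((n : ℂ) + 1) ^ 2) (Li2 z) :=
  (hasSum_one_div_nat_add_one_sq.summable.of_norm_bounded (norm_Li2_term_le hz)).hasSum

theorem Li2_one : Li2 1 = π ^ 2 / 6 := by
  have := (ofRealCLM.hasSum hasSum_one_div_nat_add_one_sq)
  simpa [Li2] using this.tsum_eq

theorem continuousOn_Li2 : ContinuousOn Li2 (Metric.closedBall 0 1) :=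
  continuousOn_tsum (fun n => by fun_prop) hasSum_one_div_nat_add_one_sq.summable
    fun n z hz => norm_Li2_term_le (mem_closedBall_zero_iff.mp hz) n

theorem tendsto_Li2_ofReal_mul {z : ℂ} (hz : ‖z‖ ≤ 1) :
    Tendsto (fun r : ℝ => Li2 (r * z)) (𝓝[<] 1) (𝓝 (Li2 z)) := by
  have hmaps : ∀ᶠ r : ℝ in 𝓝[<] 1, (r : ℂ) * z ∈ Metric.closedBall 0 1 := by
    filter_upwards [Ioo_mem_nhdsLT (zero_lt_one' ℝ)] with r hr
    rw [mem_closedBall_zero_iff, norm_mul, norm_real, norm_of_nonneg hr.1.le]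
    exact mul_le_one₀ hr.2.le (norm_nonneg z) hz
  have hlim : Tendsto (fun r : ℝ => (r : ℂ) * z) (𝓝[<] 1) (𝓝 z) := by
    have : Continuous fun r : ℝ => (r : ℂ) * z := by fun_prop
    simpa using (this.tendsto 1).mono_left nhdsWithin_le_nhds
  exact (continuousOn_Li2 z (mem_closedBall_zero_iff.mpr hz)).tendsto.comp
    (tendsto_nhdsWithin_iff.mpr ⟨hlim, hmaps⟩)

noncomputable def expTwoPiI (θ : ℝ) : ℂ := exp (2 * π * I * θ)

namespace expTwoPiI

@[fun_prop]
theorem continuous : Continuous expTwoPiI := by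
  unfold expTwoPiI; fun_prop

theorem norm_eq_one (θ : ℝ) : ‖expTwoPiI θ‖ = 1 := by
  rw [expTwoPiI, show 2 * π * I * θ = ((2 * π * θ : ℝ) : ℂ) * I by push_cast; ring]
  exact norm_exp_ofReal_mul_I _

theorem periodic : Function.Periodic expTwoPiI 1 := fun θ => by
  simp only [expTwoPiI, ofReal_add, ofReal_one, mul_add, mul_one, Complex.exp_add, exp_two_pi_mul_I]

theorem pow_eq_exp (θ : ℝ) (n : ℕ) : expTwoPiI θ ^ n = exp (2 * π * I * n * θ) := by
  rw [expTwoPiI, ← Complex.exp_nat_mul]; ring_nf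

theorem integral_pow (a : ℝ) {n : ℕ} (hn : n ≠ 0) :
    ∫ θ in (0 : ℝ)..a, expTwoPiI θ ^ n = (expTwoPiI a ^ n - 1) / (2 * π * I * n) := by
  have hc : 2 * π * I * n ≠ 0 := by simp [pi_ne_zero, hn]
  simp only [pow_eq_exp, integral_exp_mul_complex hc, ofReal_zero, mul_zero, Complex.exp_zero]

theorem eq_one_iff (θ : ℝ) : expTwoPiI θ = 1 ↔ ∃ n : ℤ, θ = n := by
  rw [expTwoPiI, Complex.exp_eq_one_iff]
  refine exists_congr fun n => ?_
  rw [show 2 * π * I * θ = θ * (2 * π * I) by ring, mul_left_inj' two_pi_I_ne_zero]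
  exact_mod_cast Iff.rfl

theorem ae_ne_one : ∀ᵐ θ : ℝ, expTwoPiI θ ≠ 1 := by
  refine ((countable_range ((↑) : ℤ → ℝ)).ae_notMem volume).mono fun θ hθ h => hθ ?_
  obtain ⟨n, rfl⟩ := (eq_one_iff θ).mp h
  exact mem_range_self n

theorem eq_circleMap (θ : ℝ) : expTwoPiI θ = circleMap 0 1 (2 * π * θ) := by
  simp only [expTwoPiI, circleMap, zero_add, ofReal_one, one_mul]
  push_cast
  ring_nf

theorem intervalIntegrable_log_norm_one_sub (a b : ℝ) :
    IntervalIntegrable (fun θ => Real.log ‖1 - expTwoPiI θ‖) volume a b := by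
  have hper : Function.Periodic (fun θ => Real.log ‖1 - expTwoPiI θ‖) 1 := fun θ => by
    simp only [periodic θ]
  refine hper.intervalIntegrable₀ one_ne_zero ?_ a b
  have hcircle := (circleIntegrable_log_norm_sub_const (a := 1) (c := 0) 1).comp_mul_left
    (c := 2 * π)
  rw [zero_div, div_self two_pi_pos.ne'] at hcircle
  exact hcircle.congr fun θ _ => by rw [eq_circleMap, norm_sub_rev]

end expTwoPiI

theorem norm_log_le_abs_log_norm_add_pi (w : ℂ) : ‖log w‖ ≤ |Real.log ‖w‖| + π := by
  calc ‖log w‖ ≤ |(log w).re| + |(log w).im| := norm_le_abs_re_add_abs_im _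
    _ ≤ |Real.log ‖w‖| + π := by rw [log_re, log_im]; gcongr; exact abs_arg_le_pi w

theorem norm_one_sub_le_two_mul_norm_one_sub_ofReal_mul {z : ℂ} (hz : ‖z‖ ≤ 1) {r : ℝ}
    (hr0 : 0 ≤ r) (hr1 : r ≤ 1) : ‖1 - z‖ ≤ 2 * ‖1 - r * z‖ := by
  have hrz : ‖(r : ℂ) * z‖ ≤ r := by
    rw [norm_mul, norm_real, norm_of_nonneg hr0]
    exact mul_le_of_le_one_right hr0 hz
  have hlower : 1 - r ≤ ‖1 - r * z‖ := by
    have := norm_sub_norm_le (1 : ℂ) (r * z)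
    rw [norm_one] at this
    linarith
  calc ‖1 - z‖ = ‖(1 - r * z) - (1 - r) * z‖ := by ring_nf
    _ ≤ ‖1 - r * z‖ + (1 - r) := by
      refine (norm_sub_le _ _).trans ?_
      gcongr
      rw [norm_mul, show (1 : ℂ) - r = ((1 - r : ℝ) : ℂ) by push_cast; ring, norm_real,
        norm_of_nonneg (by linarith)]
      exact mul_le_of_le_one_right (by linarith) hz
    _ ≤ 2 * ‖1 - r * z‖ := by linarith

theorem norm_log_one_sub_ofReal_mul_le {z : ℂ} (hz : ‖z‖ ≤ 1) (hz1 : z ≠ 1) {r : ℝ}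
    (hr0 : 0 ≤ r) (hr1 : r ≤ 1) :
    ‖log (1 - r * z)‖ ≤ |Real.log ‖1 - z‖| + Real.log 2 + π := by
  have hpos : 0 < ‖1 - z‖ := norm_pos_iff.mpr (sub_ne_zero.mpr hz1.symm)
  have hlower := norm_one_sub_le_two_mul_norm_one_sub_ofReal_mul hz hr0 hr1
  have hupper : ‖1 - r * z‖ ≤ 2 := by
    refine (norm_sub_le _ _).trans ?_
    rw [norm_one, norm_mul, norm_real, norm_of_nonneg hr0]
    nlinarith [norm_nonneg z]
  have hlog_lower : Real.log ‖1 - z‖ - Real.log 2 ≤ Real.log ‖1 - r * z‖ := by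
    rw [← Real.log_div hpos.ne' two_ne_zero]
    exact Real.log_le_log (by positivity) (by linarith)
  have hlog_upper : Real.log ‖1 - r * z‖ ≤ Real.log 2 :=
    Real.log_le_log (by linarith) hupper
  have hlog2 : 0 ≤ Real.log 2 := Real.log_nonneg one_le_two
  have habs : |Real.log ‖1 - r * z‖| ≤ |Real.log ‖1 - z‖| + Real.log 2 := by
    rw [abs_le]
    constructor <;> linarith [neg_abs_le (Real.log ‖1 - z‖), le_abs_self (Real.log ‖1 - z‖)]
  linarith [norm_log_le_abs_log_norm_add_pi (1 - r * z)]

theorem one_sub_mem_slitPlane {z : ℂ} (hz : ‖z‖ ≤ 1) (hz1 : z ≠ 1) : 1 - z ∈ slitPlane := by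
  rw [mem_slitPlane_iff, sub_re, one_re, sub_im, one_im, zero_sub, neg_ne_zero]
  by_contra! h
  obtain ⟨hre, him⟩ := h
  have : z = z.re := ext rfl (by simpa using him)
  have hre1 : z.re ≤ 1 := (re_le_norm z).trans hz
  exact hz1 (by rw [this]; norm_cast; linarith)

theorem integral_log_one_sub_mul_expTwoPiI {w : ℂ} (hw : ‖w‖ < 1) (a : ℝ) :
    ∫ θ in (0 : ℝ)..a, log (1 - w * expTwoPiI θ)
      = 1 / (2 * π * I) * (Li2 w - Li2 (w * expTwoPiI a)) := by
  have hnorm (θ : ℝ) : ‖w * expTwoPiI θ‖ = ‖w‖ := by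
    rw [norm_mul, expTwoPiI.norm_eq_one, mul_one]
  have hterm (n : ℕ) : ∫ θ in (0 : ℝ)..a, -((w * expTwoPiI θ) ^ (n + 1) / (n + 1))
      = 1 / (2 * π * I) * (w ^ (n + 1) / ((n : ℂ) + 1) ^ 2
          - (w * expTwoPiI a) ^ (n + 1) / ((n : ℂ) + 1) ^ 2) := by
    have hn : (n : ℂ) + 1 ≠ 0 := by exact_mod_cast n.add_one_ne_zero
    have hfun : (fun θ : ℝ => -((w * expTwoPiI θ) ^ (n + 1) / (n + 1)))
        = fun θ => -(w ^ (n + 1) / (n + 1)) * expTwoPiI θ ^ (n + 1) := by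
      funext θ; ring
    rw [hfun, intervalIntegral.integral_const_mul, expTwoPiI.integral_pow a n.add_one_ne_zero]
    push_cast
    field_simp
    ring
  have hsum : HasSum (fun n : ℕ => ∫ θ in (0 : ℝ)..a, -((w * expTwoPiI θ) ^ (n + 1) / (n + 1)))
      (∫ θ in (0 : ℝ)..a, log (1 - w * expTwoPiI θ)) := by
    refine intervalIntegral.hasSum_integral_of_dominated_convergence
      (fun n _ => ‖w‖ ^ (n + 1) / (n + 1)) (fun _ => ?_) (fun _ => ?_) ?_
      intervalIntegrable_const ?_
    · exact (by fun_prop : Continuous _).aestronglyMeasurable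
    · refine .of_forall fun θ _ => ?_
      rw [norm_neg, norm_div, norm_pow, hnorm]
      norm_cast
    · exact .of_forall fun _ _ => (Real.hasSum_pow_div_log_of_abs_lt_one
        (by rwa [abs_norm])).summable
    · refine .of_forall fun θ _ => ?_
      simpa using (hasSum_taylorSeries_neg_log' (hnorm θ ▸ hw)).neg
  rw [funext hterm] at hsum
  exact hsum.unique (((hasSum_Li2 hw.le).sub (hasSum_Li2 (hnorm a ▸ hw.le))).mul_left _)

theorem tendsto_integral_log_one_sub_ofReal_mul_expTwoPiI (a : ℝ) :
    Tendsto (fun r : ℝ => ∫ θ in (0 : ℝ)..a, log (1 - r * expTwoPiI θ)) (𝓝[<] 1)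
      (𝓝 (∫ θ in (0 : ℝ)..a, log (1 - expTwoPiI θ))) := by
  have hr : ∀ᶠ r : ℝ in 𝓝[<] 1, r ∈ Ioo 0 1 := Ioo_mem_nhdsLT zero_lt_one
  refine intervalIntegral.tendsto_integral_filter_of_dominated_convergence
    (fun θ => |Real.log ‖1 - expTwoPiI θ‖| + Real.log 2 + π) ?_ ?_
    (((expTwoPiI.intervalIntegrable_log_norm_one_sub 0 a).abs.add intervalIntegrable_const).add
      intervalIntegrable_const) ?_
  · exact .of_forall fun r =>
      (Complex.measurable_log.comp (by fun_prop : Continuous _).measurable).aestronglyMeasurable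
  · filter_upwards [hr] with r hr
    filter_upwards [expTwoPiI.ae_ne_one] with θ hθ _
    exact norm_log_one_sub_ofReal_mul_le (expTwoPiI.norm_eq_one θ).le hθ hr.1.le hr.2.le
  · filter_upwards [expTwoPiI.ae_ne_one] with θ hθ _
    have hlin : Tendsto (fun r : ℝ => 1 - r * expTwoPiI θ) (𝓝[<] 1) (𝓝 (1 - expTwoPiI θ)) := by
      have : Continuous fun r : ℝ => 1 - r * expTwoPiI θ := by fun_prop
      simpa using (this.tendsto 1).mono_left nhdsWithin_le_nhds
    exact (continuousAt_clog
      (one_sub_mem_slitPlane (expTwoPiI.norm_eq_one θ).le hθ)).tendsto.comp hlin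

/-- The integral of `Log(1 - e^{2πiθ})` from `0` to `a` equals
`(1/(2πi)) (π²/6 - Li₂(e^{2πia}))`. -/
theorem integral_log_one_sub_exp (a : ℝ) :
    (∫ θ : ℝ in (0:ℝ)..a,
        Complex.log (1 - Complex.exp (2 * (Real.pi : ℂ) * Complex.I * (θ : ℂ))))
      = (1 / (2 * (Real.pi : ℂ) * Complex.I)) *
          ((Real.pi : ℂ) ^ 2 / 6 - Li2 (Complex.exp (2 * (Real.pi : ℂ) * Complex.I * (a : ℂ)))) := by
  change ∫ θ in (0 : ℝ)..a, log (1 - expTwoPiI θ)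
    = 1 / (2 * π * I) * (π ^ 2 / 6 - Li2 (expTwoPiI a))
  have habel : ∀ᶠ r : ℝ in 𝓝[<] 1, ∫ θ in (0 : ℝ)..a, log (1 - r * expTwoPiI θ)
      = 1 / (2 * π * I) * (Li2 r - Li2 (r * expTwoPiI a)) := by
    filter_upwards [Ioo_mem_nhdsLT zero_lt_one] with r hr
    refine integral_log_one_sub_mul_expTwoPiI ?_ a
    rw [norm_real, norm_of_nonneg hr.1.le]; exact hr.2
  have hrhs : Tendsto (fun r : ℝ => 1 / (2 * π * I) * (Li2 r - Li2 (r * expTwoPiI a))) (𝓝[<] 1)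
      (𝓝 (1 / (2 * π * I) * (π ^ 2 / 6 - Li2 (expTwoPiI a)))) := by
    have hone : Tendsto (fun r : ℝ => Li2 r) (𝓝[<] 1) (𝓝 (π ^ 2 / 6)) := by
      simpa [Li2_one] using tendsto_Li2_ofReal_mul (z := 1) norm_one.le
    exact (hone.sub (tendsto_Li2_ofReal_mul (expTwoPiI.norm_eq_one a).le)).const_mul _
  exact tendsto_nhds_unique
    ((tendsto_integral_log_one_sub_ofReal_mul_expTwoPiI a).congr' habel) hrhs
end

section
/- Let a and x be complex numbers with x ≠ 0, x not a nonpositive real, |e^{2πia}·x| < 1 and |e^{2πia}/x| < 1. Define Φ(a,·) on a neighborhood of x by Φ(a,z) = −2πia·Log z − Li₂(e^{2πia}z) + Li₂(e^{2πia}z^{−1}), where Log is the principal complex logarithm. Then Φ(a,·) has a complex derivative D at x, and exp(x·D) = e^{2πia} + e^{−2πia} − x − x^{−1}. -/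
/-!
Termwise differentiation gives `Li₂'(w) = ∑ wⁿ/(n+1)` on the open unit disk, so
`w · Li₂'(w) = ∑ wⁿ⁺¹/(n+1) = -Log(1 - w)`. With `q = e^{2πia}` this turns `x · ∂Φ/∂x` into
`-2πia + Log(1 - qx) + Log(1 - q/x)`, whose exponential is
`q⁻¹ (1 - qx)(1 - q/x) = q + q⁻¹ - x - x⁻¹`.
-/

open Complex Real

lemma norm_pow_div_succ_le (y : ℂ) (n : ℕ) : ‖y ^ n / ((n : ℂ) + 1)‖ ≤ ‖y‖ ^ n := by
  rw [norm_div, norm_pow]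
  have hn : (1 : ℝ) ≤ ‖(n : ℂ) + 1‖ := by
    rw [← Nat.cast_succ, Complex.norm_natCast]
    exact_mod_cast Nat.succ_pos n
  exact div_le_self (by positivity) hn

lemma hasDerivAt_Li2 {z : ℂ} (hz : ‖z‖ < 1) :
    HasDerivAt Li2 (∑' n : ℕ, z ^ n / ((n : ℂ) + 1)) z := by
  obtain ⟨r, hzr, hr1⟩ := exists_between hz
  have hr0 : 0 < r := (norm_nonneg z).trans_lt hzr
  refine hasDerivAt_tsum_of_isPreconnected (u := fun n : ℕ => r ^ n)
    (g := fun n y => y ^ (n + 1) / ((n : ℂ) + 1) ^ 2) (g' := fun n y => y ^ n / ((n : ℂ) + 1))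
    (summable_geometric_of_lt_one hr0.le hr1) Metric.isOpen_ball
    (convex_ball (0 : ℂ) r).isPreconnected (fun n y _ => ?_) (fun n y hy => ?_)
    (Metric.mem_ball_self hr0) ?_ (mem_ball_zero_iff.mpr hzr)
  · have hn : (n : ℂ) + 1 ≠ 0 := Nat.cast_add_one_ne_zero n
    refine ((hasDerivAt_pow (n + 1) y).div_const (((n : ℂ) + 1) ^ 2)).congr_deriv ?_
    rw [Nat.add_sub_cancel, Nat.cast_succ]
    field_simp
  · exact (norm_pow_div_succ_le y n).trans
      (pow_le_pow_left₀ (norm_nonneg y) (mem_ball_zero_iff.mp hy).le n)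
  · simp

lemma mul_tsum_pow_div_succ {z : ℂ} (hz : ‖z‖ < 1) :
    z * ∑' n : ℕ, z ^ n / ((n : ℂ) + 1) = -Complex.log (1 - z) := by
  rw [← tsum_mul_left, ← (hasSum_taylorSeries_neg_log' hz).tsum_eq]
  simp only [pow_succ', mul_div_assoc]

lemma one_sub_ne_zero_of_norm_lt_one {z : ℂ} (hz : ‖z‖ < 1) : 1 - z ≠ 0 :=
  sub_ne_zero_of_ne <| by rintro rfl; simp at hz

theorem figure_eight_potential_deriv_general (a x : ℂ)
    (hslit : ¬ (x.im = 0 ∧ x.re ≤ 0))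
    (h1 : ‖Complex.exp (2 * (Real.pi : ℂ) * Complex.I * a) * x‖ < 1)
    (h2 : ‖Complex.exp (2 * (Real.pi : ℂ) * Complex.I * a) / x‖ < 1) :
    ∃ D : ℂ,
      HasDerivAt (fun z : ℂ =>
          -(2 * (Real.pi : ℂ) * Complex.I * a) * Complex.log z
            - Li2 (Complex.exp (2 * (Real.pi : ℂ) * Complex.I * a) * z)
            + Li2 (Complex.exp (2 * (Real.pi : ℂ) * Complex.I * a) * z⁻¹)) D x ∧
      Complex.exp (x * D)
        = Complex.exp (2 * (Real.pi : ℂ) * Complex.I * a)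
            + Complex.exp (-(2 * (Real.pi : ℂ) * Complex.I * a)) - x - x⁻¹ := by
  set c : ℂ := 2 * (Real.pi : ℂ) * Complex.I * a
  set q : ℂ := Complex.exp c with hq
  rw [div_eq_mul_inv] at h2
  have hx_mem : x ∈ slitPlane := by
    rw [mem_slitPlane_iff]
    by_contra! h
    exact hslit ⟨h.2, h.1⟩
  have hx : x ≠ 0 := slitPlane_ne_zero hx_mem
  have hlog := (hasDerivAt_log hx_mem).const_mul (-c)
  have hLi2 := (hasDerivAt_Li2 h1).comp x ((hasDerivAt_id x).const_mul q)
  have hLi2_inv := (hasDerivAt_Li2 h2).comp x ((hasDerivAt_inv hx).const_mul q)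
  refine ⟨_, (hlog.sub hLi2).add hLi2_inv, ?_⟩
  have hxD : x * (-c * x⁻¹ - (∑' n : ℕ, (q * x) ^ n / ((n : ℂ) + 1)) * (q * 1)
      + (∑' n : ℕ, (q * x⁻¹) ^ n / ((n : ℂ) + 1)) * (q * -(x ^ 2)⁻¹))
      = -c + Complex.log (1 - q * x) + Complex.log (1 - q * x⁻¹) := by
    rw [← neg_neg (Complex.log (1 - q * x)), ← neg_neg (Complex.log (1 - q * x⁻¹)),
      ← mul_tsum_pow_div_succ h1, ← mul_tsum_pow_div_succ h2]
    field_simp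
    ring
  have hq0 : q ≠ 0 := exp_ne_zero c
  rw [hxD, Complex.exp_add, Complex.exp_add, Complex.exp_log (one_sub_ne_zero_of_norm_lt_one h1),
    Complex.exp_log (one_sub_ne_zero_of_norm_lt_one h2), Complex.exp_neg, ← hq]
  field_simp
  ring

/-- The derivative of the figure-eight potential function
`Φ(a,z) = -2πia Log z - Li₂(e^{2πia} z) + Li₂(e^{2πia} z⁻¹)` satisfies
`exp (x ∂Φ/∂x) = e^{2πia} + e^{-2πia} - x - x⁻¹`. -/
theorem figure_eight_potential_deriv (a x : ℂ) (hx : x ≠ 0)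
    (hslit : ¬ (x.im = 0 ∧ x.re ≤ 0))
    (h1 : ‖Complex.exp (2 * (Real.pi : ℂ) * Complex.I * a) * x‖ < 1)
    (h2 : ‖Complex.exp (2 * (Real.pi : ℂ) * Complex.I * a) / x‖ < 1) :
    ∃ D : ℂ,
      HasDerivAt (fun z : ℂ =>
          -(2 * (Real.pi : ℂ) * Complex.I * a) * Complex.log z
            - Li2 (Complex.exp (2 * (Real.pi : ℂ) * Complex.I * a) * z)
            + Li2 (Complex.exp (2 * (Real.pi : ℂ) * Complex.I * a) * z⁻¹)) D x ∧
      Complex.exp (x * D)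
        = Complex.exp (2 * (Real.pi : ℂ) * Complex.I * a)
            + Complex.exp (-(2 * (Real.pi : ℂ) * Complex.I * a)) - x - x⁻¹ :=
  figure_eight_potential_deriv_general a x hslit h1 h2
end

section
/- Let θ and φ be real numbers with cos θ − cos φ = 1/2. Then sin((φ+θ)/2) and sin((φ−θ)/2) are both nonzero, and setting f = sin((φ+θ)/2)/sin((φ−θ)/2), one has (f + f^{−1})/2 = 1 + cos θ − cos 2θ. -/
open Real

/-!
Prosthaphaeresis turns the hypothesis into `sin((φ+θ)/2) · sin((φ-θ)/2) = 1/4`, so both factors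
are nonzero and `(f + f⁻¹)/2 = 2 (sin²((φ+θ)/2) + sin²((φ-θ)/2)) = 2 (1 - cos φ cos θ)`;
substituting `cos φ = cos θ - 1/2` and `cos 2θ = 2 cos² θ - 1` gives `1 + cos θ - cos 2θ`.
-/

namespace Real

theorem cos_sub_cos_eq_two_mul_sin_mul_sin (θ φ : ℝ) :
    cos θ - cos φ = 2 * sin ((φ + θ) / 2) * sin ((φ - θ) / 2) := by
  rw [cos_sub_cos, add_comm θ, ← neg_sub φ θ, neg_div, sin_neg]
  ring

theorem sin_sq_half_add_add_sin_sq_half_sub (θ φ : ℝ) :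
    sin ((φ + θ) / 2) ^ 2 + sin ((φ - θ) / 2) ^ 2 = 1 - cos φ * cos θ := by
  have half_add : sin ((φ + θ) / 2) ^ 2 = (1 - cos (φ + θ)) / 2 := by
    rw [sin_sq_eq_half_sub, mul_div_cancel₀ _ two_ne_zero]; ring
  have half_sub : sin ((φ - θ) / 2) ^ 2 = (1 - cos (φ - θ)) / 2 := by
    rw [sin_sq_eq_half_sub, mul_div_cancel₀ _ two_ne_zero]; ring
  rw [half_add, half_sub, cos_add, cos_sub]
  ring

end Real

theorem div_add_inv_div {K : Type*} [Field K] {a b : K} (ha : a ≠ 0) (hb : b ≠ 0) :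
    a / b + (a / b)⁻¹ = (a ^ 2 + b ^ 2) / (a * b) := by
  field_simp

/-- The key trigonometric identity of the figure-eight knot example: if
`cos θ - cos φ = 1/2`, then for `f = sin((φ+θ)/2) / sin((φ-θ)/2)` one has
`(f + f⁻¹)/2 = 1 + cos θ - cos 2θ`. -/
theorem figure_eight_cosh_identity (θ φ : ℝ) (h : Real.cos θ - Real.cos φ = 1/2) :
    Real.sin ((φ + θ) / 2) ≠ 0 ∧ Real.sin ((φ - θ) / 2) ≠ 0 ∧
    (let f : ℝ := Real.sin ((φ + θ) / 2) / Real.sin ((φ - θ) / 2)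
     (f + f⁻¹) / 2 = 1 + Real.cos θ - Real.cos (2 * θ)) := by
  have prod : sin ((φ + θ) / 2) * sin ((φ - θ) / 2) = 1 / 4 := by
    linarith [cos_sub_cos_eq_two_mul_sin_mul_sin θ φ]
  have hadd : sin ((φ + θ) / 2) ≠ 0 := left_ne_zero_of_mul (by rw [prod]; norm_num)
  have hsub : sin ((φ - θ) / 2) ≠ 0 := right_ne_zero_of_mul (by rw [prod]; norm_num)
  refine ⟨hadd, hsub, ?_⟩
  have hφ : cos φ = cos θ - 1 / 2 := by linarith
  calc _ = (sin ((φ + θ) / 2) ^ 2 + sin ((φ - θ) / 2) ^ 2) / (1 / 4 * 2) := by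
        rw [div_add_inv_div hadd hsub, prod, div_div]
    _ = 2 * (1 - cos φ * cos θ) := by rw [sin_sq_half_add_add_sin_sq_half_sub]; ring
    _ = 1 + cos θ - cos (2 * θ) := by rw [hφ, cos_two_mul]; ring
end

section
/- Let b ∈ ℂ and let w₁, w₂, w₃, w₄ be nonzero complex numbers such that w₁w₃/(w₂w₄) is not a nonpositive real, and let U ⊆ ℂ be an open set of complex numbers a such that |e_a·w₄/w₃| < 1 and |e_a·w₁/w₂| < 1 for all a ∈ U, where e_a = e^{πia}, e_b = e^{πib}, and such that |e_b·w₄/w₁| ≤ 1 and |e_b·w₃/w₂| ≤ 1 and |w₂w₄/(w₁w₃)| ≤ 1. Define Φ⁺ on U by Φ⁺(a) = (πi(a+b)/2)·Log(w₁w₃/(w₂w₄)) − Log(w₂/w₁)·Log(w₃/w₂) − Li₂(e_a·w₄/w₃) − Li₂(e_b·w₄/w₁) + Li₂(w₂w₄/(w₁w₃)) + Li₂(e_a·w₁/w₂) + Li₂(e_b·w₃/w₂) − π²/6. Then Φ⁺ has a complex derivative D_a at each a ∈ U, and exp((2/(πi))·D_a) = (1 − e_a·w₄/w₃)(1 − e_a^{−1}·w₃/w₄)·(1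 − e_a·w₁/w₂)^{−1}(1 − e_a^{−1}·w₂/w₁)^{−1} (the inverted factors are nonzero since |e_a·w₁/w₂| < 1 and |e_a^{−1}·w₂/w₁| > 1). -/
open Complex Real

lemma hasDerivAt_Li2_exp_mul (c k a : ℂ) (h : ‖exp (c * a) * k‖ < 1) :
    HasDerivAt (fun α => Li2 (exp (c * α) * k)) (-c * Complex.log (1 - exp (c * a) * k)) a := by
  have hf := ((hasDerivAt_id a).const_mul c).cexp.mul_const k
  refine ((hasDerivAt_Li2 h).comp a hf).congr_deriv ?_
  rw [← neg_neg (Complex.log _), ← mul_tsum_pow_div_succ h]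
  simp only [id_eq, mul_one]
  ring

lemma one_sub_inv_mul_div {e v w : ℂ} (he : e ≠ 0) (hv : v ≠ 0) (hw : w ≠ 0) :
    1 - e⁻¹ * v / w = -(e⁻¹ * v / w) * (1 - e * w / v) := by
  field_simp
  ring

lemma cross_ratio_mul_sq_div_sq_eq {e w₁ w₂ w₃ w₄ : ℂ} (he : e ≠ 0) (h₁ : w₁ ≠ 0) (h₂ : w₂ ≠ 0)
    (h₃ : w₃ ≠ 0) (h₄ : w₄ ≠ 0) :
    w₁ * w₃ / (w₂ * w₄) * (1 - e * w₄ / w₃) ^ 2 / (1 - e * w₁ / w₂) ^ 2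
      = (1 - e * w₄ / w₃) * (1 - e⁻¹ * w₃ / w₄)
        * (1 - e * w₁ / w₂)⁻¹ * (1 - e⁻¹ * w₂ / w₁)⁻¹ := by
  rw [one_sub_inv_mul_div he h₃ h₄, one_sub_inv_mul_div he h₂ h₁]
  field_simp

theorem positive_crossing_color_deriv_general (b : ℂ) (w₁ w₂ w₃ w₄ : ℂ)
    (h₁ : w₁ ≠ 0) (h₂ : w₂ ≠ 0) (h₃ : w₃ ≠ 0) (h₄ : w₄ ≠ 0)
    (U : Set ℂ)
    (hUa : ∀ a ∈ U,
      ‖Complex.exp ((Real.pi : ℂ) * Complex.I * a) * w₄ / w₃‖ < 1 ∧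
      ‖Complex.exp ((Real.pi : ℂ) * Complex.I * a) * w₁ / w₂‖ < 1) :
    ∀ a ∈ U, ∃ D : ℂ,
      HasDerivAt (fun α : ℂ =>
          ((Real.pi : ℂ) * Complex.I * (α + b) / 2) * Complex.log (w₁ * w₃ / (w₂ * w₄))
            - Complex.log (w₂ / w₁) * Complex.log (w₃ / w₂)
            - Li2 (Complex.exp ((Real.pi : ℂ) * Complex.I * α) * w₄ / w₃)
            - Li2 (Complex.exp ((Real.pi : ℂ) * Complex.I * b) * w₄ / w₁)
            + Li2 (w₂ * w₄ / (w₁ * w₃))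
            + Li2 (Complex.exp ((Real.pi : ℂ) * Complex.I * α) * w₁ / w₂)
            + Li2 (Complex.exp ((Real.pi : ℂ) * Complex.I * b) * w₃ / w₂)
            - (Real.pi : ℂ) ^ 2 / 6) D a ∧
      Complex.exp ((2 / ((Real.pi : ℂ) * Complex.I)) * D)
        = (1 - Complex.exp ((Real.pi : ℂ) * Complex.I * a) * w₄ / w₃)
            * (1 - (Complex.exp ((Real.pi : ℂ) * Complex.I * a))⁻¹ * w₃ / w₄)
            * (1 - Complex.exp ((Real.pi : ℂ) * Complex.I * a) * w₁ / w₂)⁻¹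
            * (1 - (Complex.exp ((Real.pi : ℂ) * Complex.I * a))⁻¹ * w₂ / w₁)⁻¹ := by
  intro a ha
  obtain ⟨hx, hy⟩ := hUa a ha
  set c : ℂ := π * I
  set e := exp (c * a)
  set L := Complex.log (w₁ * w₃ / (w₂ * w₄))
  have hLin : HasDerivAt (fun α => c * (α + b) / 2 * L) (c * 1 / 2 * L) a :=
    ((((hasDerivAt_id a).add_const b).const_mul c).div_const 2).mul_const L
  have hLix := hasDerivAt_Li2_exp_mul c (w₄ / w₃) a (by rwa [← mul_div_assoc])
  have hLiy := hasDerivAt_Li2_exp_mul c (w₁ / w₂) a (by rwa [← mul_div_assoc])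
  simp only [← mul_div_assoc] at hLix hLiy
  refine ⟨_, ((((((hLin.sub_const _).sub hLix).sub_const _).add_const _).add hLiy).add_const
    _).sub_const _, ?_⟩
  have hx1 : 1 - e * w₄ / w₃ ≠ 0 := sub_ne_zero.mpr fun h => by simp [← h] at hx
  have hy1 : 1 - e * w₁ / w₂ ≠ 0 := sub_ne_zero.mpr fun h => by simp [← h] at hy
  have hc : c ≠ 0 := mul_ne_zero (ofReal_ne_zero.mpr pi_ne_zero) I_ne_zero
  calc exp (2 / c * (c * 1 / 2 * L - -c * Complex.log (1 - e * w₄ / w₃)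
          + -c * Complex.log (1 - e * w₁ / w₂)))
      = exp L * exp (Complex.log (1 - e * w₄ / w₃)) ^ 2
          / exp (Complex.log (1 - e * w₁ / w₂)) ^ 2 := by
        rw [← Complex.exp_nat_mul, ← Complex.exp_nat_mul, ← Complex.exp_add, ← Complex.exp_sub]
        congr 1
        field_simp
        push_cast
        ring
    _ = w₁ * w₃ / (w₂ * w₄) * (1 - e * w₄ / w₃) ^ 2 / (1 - e * w₁ / w₂) ^ 2 := by
        rw [exp_log (by simp [*]), exp_log hx1, exp_log hy1]
    _ = _ := cross_ratio_mul_sq_div_sq_eq (exp_ne_zero _) h₁ h₂ h₃ h₄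

/-- The derivative of the positive-crossing potential function `Φ⁺_c` with respect to the
color parameter `a`:  `exp ((2/(πi)) ∂Φ⁺/∂a)
  = (1 - e_a w₄/w₃)(1 - e_a⁻¹ w₃/w₄)(1 - e_a w₁/w₂)⁻¹(1 - e_a⁻¹ w₂/w₁)⁻¹`. -/
theorem positive_crossing_color_deriv (b : ℂ) (w₁ w₂ w₃ w₄ : ℂ)
    (h₁ : w₁ ≠ 0) (h₂ : w₂ ≠ 0) (h₃ : w₃ ≠ 0) (h₄ : w₄ ≠ 0)
    (hslit : ¬ ((w₁ * w₃ / (w₂ * w₄)).im = 0 ∧ (w₁ * w₃ / (w₂ * w₄)).re ≤ 0))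
    (U : Set ℂ) (hU : IsOpen U)
    (hUa : ∀ a ∈ U,
      ‖Complex.exp ((Real.pi : ℂ) * Complex.I * a) * w₄ / w₃‖ < 1 ∧
      ‖Complex.exp ((Real.pi : ℂ) * Complex.I * a) * w₁ / w₂‖ < 1)
    (hb1 : ‖Complex.exp ((Real.pi : ℂ) * Complex.I * b) * w₄ / w₁‖ ≤ 1)
    (hb2 : ‖Complex.exp ((Real.pi : ℂ) * Complex.I * b) * w₃ / w₂‖ ≤ 1)
    (hw : ‖w₂ * w₄ / (w₁ * w₃)‖ ≤ 1) :
    ∀ a ∈ U, ∃ D : ℂ,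
      HasDerivAt (fun α : ℂ =>
          ((Real.pi : ℂ) * Complex.I * (α + b) / 2) * Complex.log (w₁ * w₃ / (w₂ * w₄))
            - Complex.log (w₂ / w₁) * Complex.log (w₃ / w₂)
            - Li2 (Complex.exp ((Real.pi : ℂ) * Complex.I * α) * w₄ / w₃)
            - Li2 (Complex.exp ((Real.pi : ℂ) * Complex.I * b) * w₄ / w₁)
            + Li2 (w₂ * w₄ / (w₁ * w₃))
            + Li2 (Complex.exp ((Real.pi : ℂ) * Complex.I * α) * w₁ / w₂)
            + Li2 (Complex.exp ((Real.pi : ℂ) * Complex.I * b) * w₃ / w₂)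
            - (Real.pi : ℂ) ^ 2 / 6) D a ∧
      Complex.exp ((2 / ((Real.pi : ℂ) * Complex.I)) * D)
        = (1 - Complex.exp ((Real.pi : ℂ) * Complex.I * a) * w₄ / w₃)
            * (1 - (Complex.exp ((Real.pi : ℂ) * Complex.I * a))⁻¹ * w₃ / w₄)
            * (1 - Complex.exp ((Real.pi : ℂ) * Complex.I * a) * w₁ / w₂)⁻¹
            * (1 - (Complex.exp ((Real.pi : ℂ) * Complex.I * a))⁻¹ * w₂ / w₁)⁻¹ :=
  positive_crossing_color_deriv_general b w₁ w₂ w₃ w₄ h₁ h₂ h₃ h₄ U hUa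
end
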